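/- Let α, γ ∈ [0,1] and c ∈ [−1,1], and set U := 1 + γ² − α² − α²γ²c². If U > 0 then (1 + γ²)/√U − 1 ≥ α²/2. Equivalently: for β > 0 and vectors E, B ∈ ℝ³ with ‖E‖ ≤ β, ‖B‖ ≤ β and U(E,B) > 0, the Born–Infeld energy density dominates the Maxwell electrostatic energy density of the same electric field: u_BI(E,B) ≥ ‖E‖²/2. -/

import Mathlib

open Real
open scoped RealInnerProductSpace

noncomputable section

/-- Three-dimensional Euclidean space. -/
abbrev E3 := EuclideanSpace ℝ (Fin 3)

/-- The Born–Infeld function `U(E,B) = 1 + ‖B‖²/β² − ‖E‖²/β² − (E⋅B)²/β⁴`. -/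
def Ubi (β : ℝ) (E B : E3) : ℝ :=
  1 + ‖B‖ ^ 2 / β ^ 2 - ‖E‖ ^ 2 / β ^ 2 - ⟪E, B⟫ ^ 2 / β ^ 4

/-- The Born–Infeld energy density `u_BI(E,B) = (β²/√U)(1 + ‖B‖²/β² − √U)`. -/
def uBI (β : ℝ) (E B : E3) : ℝ :=
  β ^ 2 / Real.sqrt (Ubi β E B) * (1 + ‖B‖ ^ 2 / β ^ 2 - Real.sqrt (Ubi β E B))

/-! Writing `a = α²`, `g = γ²`, the dot-product term of `U` only lowers it, so `U ≤ 1 + g − a`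
and it suffices to show `(1 + g − a)(1 + a/2)² ≤ (1 + g)²`. The difference of the two sides is
`g² + (1 − a − a²/4) g + a²(3 + a)/4`, a quadratic in `g` which is nonnegative for `g ≥ 0`
once `a ≤ 1`. -/

lemma sub_mul_one_add_half_sq_le_sq {a g : ℝ} (ha₀ : 0 ≤ a) (ha₁ : a ≤ 1) (hg : 0 ≤ g) :
    (1 + g - a) * (1 + a / 2) ^ 2 ≤ (1 + g) ^ 2 := by
  nlinarith [mul_nonneg ha₀ hg, mul_nonneg (mul_nonneg ha₀ ha₀) hg, sq_nonneg (g - a / 2),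
    mul_nonneg (sub_nonneg.2 ha₁) hg, mul_nonneg (mul_nonneg ha₀ ha₀) ha₀]

lemma one_add_half_le_div_sqrt {a g U : ℝ} (ha₀ : 0 ≤ a) (ha₁ : a ≤ 1) (hg : 0 ≤ g)
    (hU : 0 < U) (hUle : U ≤ 1 + g - a) :
    1 + a / 2 ≤ (1 + g) / √U := by
  rw [le_div_iff₀ (sqrt_pos.2 hU)]
  refine (pow_le_pow_iff_left₀ (by positivity) (by positivity) two_ne_zero).1 ?_
  calc ((1 + a / 2) * √U) ^ 2 = U * (1 + a / 2) ^ 2 := by rw [mul_pow, sq_sqrt hU.le]; ring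
    _ ≤ (1 + g - a) * (1 + a / 2) ^ 2 := by gcongr
    _ ≤ (1 + g) ^ 2 := sub_mul_one_add_half_sq_le_sq ha₀ ha₁ hg

lemma uBI_eq_mul (β : ℝ) (E B : E3) (hU : 0 < Ubi β E B) :
    uBI β E B = β ^ 2 * ((1 + ‖B‖ ^ 2 / β ^ 2) / √(Ubi β E B) - 1) := by
  have hs : √(Ubi β E B) ≠ 0 := (sqrt_pos.2 hU).ne'
  rw [uBI]
  field_simp

lemma Ubi_le_one_add_sub (β : ℝ) (E B : E3) :
    Ubi β E B ≤ 1 + ‖B‖ ^ 2 / β ^ 2 - ‖E‖ ^ 2 / β ^ 2 := by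
  rw [Ubi]
  linarith [show 0 ≤ ⟪E, B⟫ ^ 2 / β ^ 4 by positivity]

/-- **The Born–Infeld energy density dominates the Maxwell electrostatic energy density
of the same electric field.**  In normalized variables `α, γ ∈ [0,1]`, `c ∈ [−1,1]`
with `U = 1 + γ² − α² − α²γ²c² > 0` one has `(1+γ²)/√U − 1 ≥ α²/2`; equivalently,
for fields with `‖E‖ ≤ β`, `‖B‖ ≤ β` and `U(E,B) > 0`, `u_BI(E,B) ≥ ‖E‖²/2`. -/
theorem bornInfeld_energy_dominates_maxwell_electrostatic :
    (∀ α γ c : ℝ, α ∈ Set.Icc (0 : ℝ) 1 → γ ∈ Set.Icc (0 : ℝ) 1 →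
      c ∈ Set.Icc (-1 : ℝ) 1 →
      0 < 1 + γ ^ 2 - α ^ 2 - α ^ 2 * γ ^ 2 * c ^ 2 →
      (1 + γ ^ 2) / Real.sqrt (1 + γ ^ 2 - α ^ 2 - α ^ 2 * γ ^ 2 * c ^ 2) - 1 ≥
        α ^ 2 / 2) ∧
    (∀ β : ℝ, 0 < β → ∀ E B : E3, ‖E‖ ≤ β → ‖B‖ ≤ β → 0 < Ubi β E B →
      uBI β E B ≥ ‖E‖ ^ 2 / 2) := by
  constructor
  · intro α γ c hα _ _ hU
    have hα₁ : α ^ 2 ≤ 1 := pow_le_one₀ hα.1 hα.2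
    have hUle := sub_le_self (1 + γ ^ 2 - α ^ 2) (by positivity : 0 ≤ α ^ 2 * γ ^ 2 * c ^ 2)
    linarith [one_add_half_le_div_sqrt (sq_nonneg α) hα₁ (sq_nonneg γ) hU hUle]
  · intro β hβ E B hE _ hU
    have hE₁ : ‖E‖ ^ 2 / β ^ 2 ≤ 1 :=
      div_le_one_of_le₀ (pow_le_pow_left₀ (norm_nonneg E) hE 2) (sq_nonneg β)
    have key := one_add_half_le_div_sqrt (by positivity) hE₁ (by positivity) hU
      (Ubi_le_one_add_sub β E B)
    rw [uBI_eq_mul β E B hU, ge_iff_le]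
    calc ‖E‖ ^ 2 / 2 = β ^ 2 * (‖E‖ ^ 2 / β ^ 2 / 2) := by field_simp
      _ ≤ _ := by gcongr; linarith

end
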